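/- Let q > 1 be an integer such that there is no projective plane of order q. Then μ(q² + q + 1) > f(q² + q + 1) = q. Equivalently (contrapositive): if there exists a mediated digraph on q² + q + 1 vertices with maximum in-degree at most q, then there exists a projective plane of order q. -/

import Mathlib

/-- The in-degree of vertex `z` in the digraph on `Fin n` with arc relation `A`
(`A x z` means `x` dominates `z`). -/
noncomputable def inDeg {n : ℕ} (A : Fin n → Fin n → Prop) (z : Fin n) : ℕ :=
  Nat.card {x : Fin n // A x z}

/-- The maximum in-degree `Δ⁻(D)` of the digraph on `Fin n` with arc relation `A`. -/
noncomputable def maxInDeg {n : ℕ} (A : Fin n → Fin n → Prop) : ℕ :=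
  Finset.univ.sup (inDeg A)

/-- A digraph is mediated if for every pair of distinct vertices `x, y` there is a
vertex `z` with `x, y ∈ N⁻[z]` (possibly `z = x` or `z = y`). -/
def Mediated {n : ℕ} (A : Fin n → Fin n → Prop) : Prop :=
  ∀ x y : Fin n, x ≠ y → ∃ z : Fin n, (x = z ∨ A x z) ∧ (y = z ∨ A y z)

/-- The `n`th mediation number `μ(n)`: the minimum of `Δ⁻(D)` over all mediated
digraphs (irreflexive arc relations) on `n` vertices. -/
noncomputable def mu (n : ℕ) : ℕ :=
  sInf { d : ℕ | ∃ A : Fin n → Fin n → Prop, Irreflexive A ∧ Mediated A ∧ maxInDeg A = d }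

/-- `f(n) = ⌈(√(4n−3) − 1)/2⌉`. -/
noncomputable def f (n : ℕ) : ℕ := ⌈(Real.sqrt (4 * (n : ℝ) - 3) - 1) / 2⌉₊

/-- `B` is a projective plane of order `q`: a symmetric `(q²+q+1, q+1, 1)`-design,
i.e. `q²+q+1` blocks on `q²+q+1` points, each block of size `q+1`, and every pair
of distinct points contained in exactly one block. -/
def IsProjectivePlane (q : ℕ) (B : Fin (q^2+q+1) → Finset (Fin (q^2+q+1))) : Prop :=
  (∀ i, (B i).card = q + 1) ∧
  ∀ x y : Fin (q^2+q+1), x ≠ y →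
    (Finset.univ.filter fun i => x ∈ B i ∧ y ∈ B i).card = 1

/-- There exists a projective plane of order `q`. -/
def ExistsProjectivePlane (q : ℕ) : Prop := ∃ B, IsProjectivePlane q B

/-!
The closed in-neighbourhoods `N⁻[z]` of a mediated digraph on `n = q² + q + 1` vertices cover
every ordered pair of distinct vertices. If every in-degree is at most `q`, each of the `n`
neighbourhoods contains at most `(q + 1) q` such pairs, while there are `n (n - 1) = n (q + 1) q`
of them. The count is therefore tight: every pair lies in exactly one neighbourhood and every
neighbourhood has exactly `q + 1` vertices, so the neighbourhoods are the lines of a projective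
plane of order `q`.
-/

open Finset

lemma Finset.card_offDiag_le_of_card_le {α : Type*} [DecidableEq α] {s : Finset α} {k : ℕ}
    (hs : #s ≤ k + 1) : #s.offDiag ≤ (k + 1) * k := by
  rw [offDiag_card, ← Nat.mul_sub_one]
  exact Nat.mul_le_mul hs (by omega)

lemma Finset.card_eq_of_card_offDiag_eq {α : Type*} [DecidableEq α] {s : Finset α} {k : ℕ}
    (hs : s.Nonempty) (h : #s.offDiag = (k + 1) * k) : #s = k + 1 := by
  rw [offDiag_card, ← Nat.mul_sub_one] at h
  obtain ⟨m, hm⟩ : ∃ m, #s = m + 1 := Nat.exists_eq_add_one.2 hs.card_pos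
  rw [hm, Nat.add_sub_cancel] at h
  rw [hm, Nat.add_right_cancel_iff]
  exact le_antisymm (by nlinarith) (by nlinarith)

section PairCovering

variable {ι α : Type*} [Fintype ι] [Fintype α] [DecidableEq α] (B : ι → Finset α)

lemma sum_card_blocks_containing_eq_sum_card_offDiag :
    ∑ p ∈ (univ : Finset α).offDiag, #{i | p.1 ∈ B i ∧ p.2 ∈ B i} =
      ∑ i, #(B i).offDiag := by
  refine (sum_card_bipartiteAbove_eq_sum_card_bipartiteBelow
    (fun (p : α × α) i => p.1 ∈ B i ∧ p.2 ∈ B i)).trans ?_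
  refine sum_congr rfl fun i _ => congrArg card ?_
  ext p
  simp only [bipartiteBelow, mem_filter, mem_offDiag, mem_univ, true_and]
  tauto

theorem card_offDiag_eq_and_unique_of_covers_pairs (k : ℕ) (hcard : ∀ i, #(B i) ≤ k + 1)
    (hcover : ∀ x y : α, x ≠ y → ∃ i, x ∈ B i ∧ y ∈ B i)
    (hcount : Fintype.card α * (Fintype.card α - 1) = Fintype.card ι * ((k + 1) * k)) :
    (∀ i, #(B i).offDiag = (k + 1) * k) ∧
      ∀ x y : α, x ≠ y → #{i | x ∈ B i ∧ y ∈ B i} = 1 := by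
  have hcovered :
      ∀ p ∈ (univ : Finset α).offDiag, 1 ≤ #{i | p.1 ∈ B i ∧ p.2 ∈ B i} := by
    intro p hp
    obtain ⟨i, hi⟩ := hcover p.1 p.2 (mem_offDiag.1 hp).2.2
    exact card_pos.2 ⟨i, mem_filter.2 ⟨mem_univ i, hi⟩⟩
  have hsmall : ∀ i ∈ (univ : Finset ι), #(B i).offDiag ≤ (k + 1) * k :=
    fun i _ => card_offDiag_le_of_card_le (hcard i)
  have hends : ∑ _p ∈ (univ : Finset α).offDiag, 1 = ∑ _i : ι, (k + 1) * k := by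
    simp only [sum_const, smul_eq_mul, mul_one, offDiag_card, card_univ, ← Nat.mul_sub_one,
      hcount]
  have hdouble := sum_card_blocks_containing_eq_sum_card_offDiag B
  have hblocks : ∑ i, #(B i).offDiag = ∑ _i : ι, (k + 1) * k :=
    le_antisymm (sum_le_sum hsmall) (hends ▸ hdouble ▸ sum_le_sum hcovered)
  have hpairs : ∑ p ∈ (univ : Finset α).offDiag, #{i | p.1 ∈ B i ∧ p.2 ∈ B i} =
      ∑ _p ∈ (univ : Finset α).offDiag, 1 :=
    le_antisymm (hends ▸ hdouble ▸ sum_le_sum hsmall) (sum_le_sum hcovered)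
  refine ⟨fun i => (sum_eq_sum_iff_of_le hsmall).1 hblocks i (mem_univ i), fun x y hxy => ?_⟩
  exact ((sum_eq_sum_iff_of_le hcovered).1 hpairs.symm (x, y) (by simpa using hxy)).symm

end PairCovering

section Mediated

variable {n : ℕ} (A : Fin n → Fin n → Prop)

open scoped Classical in
noncomputable def closedInNbhd (z : Fin n) : Finset (Fin n) :=
  insert z ({x | A x z} : Finset (Fin n))

lemma mem_closedInNbhd {x z : Fin n} : x ∈ closedInNbhd A z ↔ x = z ∨ A x z := by
  simp [closedInNbhd]

lemma card_closedInNbhd_le (z : Fin n) : #(closedInNbhd A z) ≤ maxInDeg A + 1 := by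
  classical
  have hdeg : #{x | A x z} = inDeg A z := by
    rw [inDeg, Nat.card_eq_fintype_card, Fintype.card_subtype]
  calc #(closedInNbhd A z) ≤ #{x | A x z} + 1 := card_insert_le z _
    _ ≤ maxInDeg A + 1 := by
        rw [hdeg]
        exact Nat.add_le_add_right (le_sup (mem_univ z)) 1

end Mediated

theorem Mediated.existsProjectivePlane {q : ℕ}
    {A : Fin (q ^ 2 + q + 1) → Fin (q ^ 2 + q + 1) → Prop} (hmed : Mediated A)
    (hdeg : maxInDeg A ≤ q) : ExistsProjectivePlane q := by
  have hcard : ∀ z, #(closedInNbhd A z) ≤ q + 1 :=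
    fun z => (card_closedInNbhd_le A z).trans (Nat.add_le_add_right hdeg 1)
  have hcover : ∀ x y, x ≠ y → ∃ z, x ∈ closedInNbhd A z ∧ y ∈ closedInNbhd A z := by
    intro x y hxy
    obtain ⟨z, hx, hy⟩ := hmed x y hxy
    exact ⟨z, (mem_closedInNbhd A).2 hx, (mem_closedInNbhd A).2 hy⟩
  obtain ⟨hpairs, hunique⟩ :=
    card_offDiag_eq_and_unique_of_covers_pairs (closedInNbhd A) q hcard hcover (by
      simp only [Fintype.card_fin, Nat.add_sub_cancel]
      ring)
  exact ⟨closedInNbhd A, fun z => card_eq_of_card_offDiag_eq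
    ⟨z, (mem_closedInNbhd A).2 (Or.inl rfl)⟩ (hpairs z), hunique⟩

lemma exists_mediated_maxInDeg_eq_mu (n : ℕ) :
    ∃ A : Fin n → Fin n → Prop, Irreflexive A ∧ Mediated A ∧ maxInDeg A = mu n :=
  Nat.sInf_mem (s := {d | ∃ A : Fin n → Fin n → Prop,
    Irreflexive A ∧ Mediated A ∧ maxInDeg A = d}) ⟨_, (· ≠ ·), fun _ hx => hx rfl,
    fun x _ hxy => ⟨x, Or.inl rfl, Or.inr hxy.symm⟩, rfl⟩

lemma f_sq_add_add_one (q : ℕ) : f (q ^ 2 + q + 1) = q := by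
  have hsq : 4 * ((q ^ 2 + q + 1 : ℕ) : ℝ) - 3 = (2 * q + 1) ^ 2 := by
    push_cast
    ring
  rw [f, hsq, Real.sqrt_sq (by positivity), add_sub_cancel_right,
    mul_div_cancel_left₀ _ two_ne_zero, Nat.ceil_natCast]

theorem mu_gt_f_of_no_projective_plane_general (q : ℕ)
    (h : ¬ ExistsProjectivePlane q) :
    f (q ^ 2 + q + 1) = q ∧ f (q ^ 2 + q + 1) < mu (q ^ 2 + q + 1) := by
  refine ⟨f_sq_add_add_one q, ?_⟩
  rw [f_sq_add_add_one]
  obtain ⟨A, -, hmed, hA⟩ := exists_mediated_maxInDeg_eq_mu (q ^ 2 + q + 1)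
  by_contra! hle
  exact h (hmed.existsProjectivePlane (hA ▸ hle))

/-- If `q > 1` and there is no projective plane of order `q`, then
`μ(q² + q + 1) > f(q² + q + 1) = q`. Equivalently (contrapositive): if some
mediated digraph on `q² + q + 1` vertices has maximum in-degree at most `q`,
then there exists a projective plane of order `q`. -/
theorem mu_gt_f_of_no_projective_plane (q : ℕ) (hq : 1 < q)
    (h : ¬ ExistsProjectivePlane q) :
    f (q ^ 2 + q + 1) = q ∧ f (q ^ 2 + q + 1) < mu (q ^ 2 + q + 1) :=
  mu_gt_f_of_no_projective_plane_general q h
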